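/- If S ⊊ ℤ² is BI-stable, then S contains at most 2 points from every minimal triangle. Consequently, every subset of a BI-stable proper subset of ℤ² is BI-stable. -/

import Mathlib

/-- Embed a lattice point into the plane. -/
def toR (p : ℤ × ℤ) : ℝ × ℝ := ((p.1 : ℝ), (p.2 : ℝ))

/-- Determinant of the 2×2 matrix with columns `u`, `v`. -/
def det2 (u v : ℤ × ℤ) : ℤ := u.1 * v.2 - u.2 * v.1

/-- The set of lattice points in the (closed) triangle with vertices `a b c`. -/
def triPts (a b c : ℤ × ℤ) : Set (ℤ × ℤ) :=
  {p | toR p ∈ convexHull ℝ {toR a, toR b, toR c}}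

/-- A border triangle: a lattice triangle with exactly 4 lattice points, whose
fourth point lies on the boundary (not in the interior). -/
def IsBorderTri (T : Set (ℤ × ℤ)) : Prop :=
  ∃ a b c d : ℤ × ℤ, det2 (b - a) (c - a) ≠ 0 ∧
    T = triPts a b c ∧ T = {a, b, c, d} ∧ T.ncard = 4 ∧
    toR d ∉ interior (convexHull ℝ {toR a, toR b, toR c})

/-- An internal triangle: a lattice triangle with exactly 4 lattice points, whose
fourth point lies in the interior. -/
def IsInternalTri (T : Set (ℤ × ℤ)) : Prop :=
  ∃ a b c d : ℤ × ℤ, det2 (b - a) (c - a) ≠ 0 ∧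
    T = triPts a b c ∧ T = {a, b, c, d} ∧ T.ncard = 4 ∧
    toR d ∈ interior (convexHull ℝ {toR a, toR b, toR c})

/-- `S` is B-stable: no border triangle has exactly three of its points in `S`. -/
def BStable (S : Set (ℤ × ℤ)) : Prop :=
  ∀ T, IsBorderTri T → (T ∩ S).ncard ≠ 3

/-- `S` is I-stable: no internal triangle has exactly three of its points in `S`. -/
def IStable (S : Set (ℤ × ℤ)) : Prop :=
  ∀ T, IsInternalTri T → (T ∩ S).ncard ≠ 3

/-- Upper density of a subset of `ℤ²`. -/
noncomputable def upperDensity (S : Set (ℤ × ℤ)) : ℝ :=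
  Filter.limsup (fun n : ℕ =>
    ((S ∩ Set.Icc (-(n : ℤ), -(n : ℤ)) ((n : ℤ), (n : ℤ))).ncard : ℝ) /
      (2 * (n : ℝ) + 1) ^ 2) Filter.atTop

def IsMinimalTri (T : Set (ℤ × ℤ)) : Prop := IsBorderTri T ∨ IsInternalTri T

def BIStable (S : Set (ℤ × ℤ)) : Prop := BStable S ∧ IStable S

/-!
Suppose a minimal triangle `T = {a, b, c, d}` (`d` the non-vertex) lay inside `S`. Since `d` is
not a vertex, one of its barycentric weights, say the one at `b`, is strictly between `0` and `1`.
Then `d c a` is a lattice triangle whose only lattice points are its vertices, hence unimodular,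
so `{d, c, 2c - d, a}` is a border triangle with three points in `S`, and B-stability puts
`2c - d` into `S`. Three equally spaced points `p, p + u, p + 2u` of `S` with `u` primitive
propagate, again through the border triangles `{p, p + u, p + 2u, w}` with `det(u, w - p) = ±1`,
from each lattice line parallel to `u` to the neighbouring ones, so `S = ℤ²`. Hence `T ∩ S`
has neither 4 points nor, by stability, 3; and a bound `≤ 2` passes to subsets of `S`.
-/

open Set

def det2CLM (u : ℝ × ℝ) : StrongDual ℝ (ℝ × ℝ) :=
  u.1 • ContinuousLinearMap.snd ℝ ℝ ℝ - u.2 • ContinuousLinearMap.fst ℝ ℝ ℝ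

@[simp]
lemma det2CLM_apply (u v : ℝ × ℝ) : det2CLM u v = u.1 * v.2 - u.2 * v.1 := by
  simp [det2CLM]

lemma det2CLM_toR (u v : ℤ × ℤ) : det2CLM (toR u) (toR v) = det2 u v := by
  simp [toR, det2]

lemma det2_self (u : ℤ × ℤ) : det2 u u = 0 := by
  unfold det2; ring

lemma notMem_interior_of_subset_preimage_Ici {M : Type*} [AddCommGroup M] [TopologicalSpace M]
    [ContinuousAdd M] [Module ℝ M] [ContinuousSMul ℝ M] {f : StrongDual ℝ M} (hf : f ≠ 0)
    {s : Set M} {c : ℝ} (hs : s ⊆ f ⁻¹' Ici c) {x : M} (hx : f x = c) : x ∉ interior s := by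
  intro h
  have := interior_mono hs h
  rw [← (f.isOpenMap_of_ne_zero hf).preimage_interior_eq_interior_preimage f.continuous,
    interior_Ici] at this
  exact lt_irrefl c (hx ▸ this)

lemma toR_mem_preimage_Ici_iff (e x v : ℤ × ℤ) :
    toR v ∈ det2CLM (toR e) ⁻¹' Ici (det2CLM (toR e) (toR x)) ↔ 0 ≤ det2 e (v - x) := by
  rw [mem_preimage, mem_Ici, ← sub_nonneg, ← Int.cast_nonneg_iff (R := ℝ)]
  simp [toR, det2]
  constructor <;> intro h <;> linarith

lemma convexHull_subset_preimage_Ici {a b c e x : ℤ × ℤ} (ha : 0 ≤ det2 e (a - x))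
    (hb : 0 ≤ det2 e (b - x)) (hc : 0 ≤ det2 e (c - x)) :
    convexHull ℝ {toR a, toR b, toR c} ⊆ det2CLM (toR e) ⁻¹' Ici (det2CLM (toR e) (toR x)) := by
  refine convexHull_min ?_ ((convex_Ici _).is_linear_preimage (det2CLM _).toLinearMap.isLinear)
  simp only [insert_subset_iff, singleton_subset_iff, toR_mem_preimage_Ici_iff]
  exact ⟨ha, hb, hc⟩

lemma det2_nonneg_of_mem_triPts {a b c e x q : ℤ × ℤ} (ha : 0 ≤ det2 e (a - x))
    (hb : 0 ≤ det2 e (b - x)) (hc : 0 ≤ det2 e (c - x)) (hq : q ∈ triPts a b c) :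
    0 ≤ det2 e (q - x) :=
  (toR_mem_preimage_Ici_iff e x q).mp (convexHull_subset_preimage_Ici ha hb hc hq)

lemma det2_add_det2_add_det2 (a b c q : ℤ × ℤ) :
    det2 (c - b) (q - b) + det2 (a - c) (q - c) + det2 (b - a) (q - a) = det2 (b - a) (c - a) := by
  simp only [det2, Prod.fst_sub, Prod.snd_sub]; ring

lemma det2_smul_eq_add (a b c q : ℤ × ℤ) :
    det2 (b - a) (c - a) • q =
      det2 (c - b) (q - b) • a + det2 (a - c) (q - c) • b + det2 (b - a) (q - a) • c := by
  ext <;> simp only [det2, Prod.fst_sub, Prod.snd_sub, Prod.smul_fst, Prod.smul_snd,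
    Prod.fst_add, Prod.snd_add, smul_eq_mul] <;> ring

lemma mem_triPts_iff_det2_nonneg {a b c q : ℤ × ℤ} (hD : 0 < det2 (b - a) (c - a)) :
    q ∈ triPts a b c ↔
      0 ≤ det2 (c - b) (q - b) ∧ 0 ≤ det2 (a - c) (q - c) ∧ 0 ≤ det2 (b - a) (q - a) := by
  refine ⟨fun hq => ⟨?_, ?_, ?_⟩, fun ⟨h₁, h₂, h₃⟩ => ?_⟩
  all_goals try
    refine det2_nonneg_of_mem_triPts ?_ ?_ ?_ hq <;>
      simp only [det2, Prod.fst_sub, Prod.snd_sub] at hD ⊢ <;> linarith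
  -- Cramer's rule: the barycentric weights of `q` are the three areas divided by `D`.
  set D := det2 (b - a) (c - a)
  have hDR : (D : ℝ) ≠ 0 := by exact_mod_cast hD.ne'
  have hq := congrArg toR (det2_smul_eq_add a b c q)
  simp only [toR, Prod.smul_fst, Prod.smul_snd, Prod.fst_add, Prod.snd_add, smul_eq_mul,
    Prod.mk.injEq, Int.cast_add, Int.cast_mul] at hq
  refine mem_convexHull_of_exists_fintype
    ![det2 (c - b) (q - b) / (D : ℝ), det2 (a - c) (q - c) / D, det2 (b - a) (q - a) / D]
    ![toR a, toR b, toR c] (fun i => ?_) ?_ (fun i => ?_) ?_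
  · fin_cases i <;> simp <;> positivity
  · simp only [Fin.sum_univ_three, Matrix.cons_val]
    field_simp
    exact_mod_cast det2_add_det2_add_det2 a b c q
  · fin_cases i <;> simp
  · simp only [Fin.sum_univ_three, Matrix.cons_val]
    ext <;> simp only [toR, Prod.smul_fst, Prod.smul_snd, Prod.fst_add, Prod.snd_add,
      smul_eq_mul] <;> field_simp <;> linarith [hq.1, hq.2]

lemma mem_triPts_iff {a b c q : ℤ × ℤ} (hD : 0 < det2 (b - a) (c - a)) :
    q ∈ triPts a b c ↔ 0 ≤ det2 (q - a) (c - a) ∧ 0 ≤ det2 (b - a) (q - a) ∧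
      det2 (q - a) (c - a) + det2 (b - a) (q - a) ≤ det2 (b - a) (c - a) := by
  have h₂ : det2 (a - c) (q - c) = det2 (q - a) (c - a) := by
    simp only [det2, Prod.fst_sub, Prod.snd_sub]; ring
  rw [mem_triPts_iff_det2_nonneg hD, ← h₂, ← det2_add_det2_add_det2 a b c q]
  omega

lemma triPts_rotate (a b c : ℤ × ℤ) : triPts b c a = triPts a b c := by
  simp only [triPts, insert_comm (toR b), pair_comm (toR c)]

lemma triPts_swap (a b c : ℤ × ℤ) : triPts a c b = triPts a b c := by
  simp only [triPts, pair_comm]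

lemma triPts_subset_triPts {a b c x y z : ℤ × ℤ} (hx : x ∈ triPts a b c) (hy : y ∈ triPts a b c)
    (hz : z ∈ triPts a b c) : triPts x y z ⊆ triPts a b c := fun _ hq =>
  convexHull_min (by simp only [insert_subset_iff, singleton_subset_iff]; exact ⟨hx, hy, hz⟩)
    (convex_convexHull ℝ _) hq

lemma det2_eq_one_of_triPts_subset {a b c : ℤ × ℤ} (hD : 0 < det2 (b - a) (c - a))
    (h : triPts a b c ⊆ {a, b, c}) : det2 (b - a) (c - a) = 1 := by
  set x := b - a with hx
  set y := c - a with hy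
  set D := det2 x y
  have hvert : ∀ z, 0 ≤ det2 z y → 0 ≤ det2 x z → det2 z y + det2 x z ≤ D →
      (det2 z y = 0 ∨ det2 z y = D) ∧ (det2 x z = 0 ∨ det2 x z = D) := fun z h₂ h₃ h₁ => by
    have hq := h ((mem_triPts_iff (q := a + z) hD).mpr (by simpa using ⟨h₂, h₃, h₁⟩))
    simp only [mem_insert_iff, mem_singleton_iff] at hq
    rcases hq with hq | hq | hq <;> obtain rfl := eq_sub_of_add_eq' hq <;>
      simp only [← hx, ← hy, sub_self, det2_self] <;> simp [D, det2]
  by_contra hne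
  have hD2 : 2 ≤ D := by omega
  -- A non-vertex lattice point of the triangle: `a + e` if `b - a = g • e` with `g ≥ 2`;
  -- otherwise `a + z` with `det2 (b - a) z = 1`, translated along `b - a` into the triangle.
  have hgcd : 0 < Int.gcd x.1 x.2 := by
    refine Int.gcd_pos_iff.mpr (not_and_or.mp fun h0 => hD.ne' ?_)
    simp [D, det2, h0.1, h0.2]
  obtain ⟨g, e₁, e₂, hg, he, hx₁, hx₂⟩ := Int.exists_gcd_one' hgcd
  have hxe : x = (g : ℤ) • (e₁, e₂) :=
    Prod.ext (by simp [hx₁, mul_comm]) (by simp [hx₂, mul_comm])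
  rcases Nat.lt_or_ge g 2 with hg1 | hg2
  · obtain rfl : g = 1 := by omega
    obtain ⟨r, s, hrs⟩ := Int.isCoprime_iff_gcd_eq_one.mpr he
    set v : ℤ × ℤ := (-s, r)
    have hxv : det2 x v = 1 := by simp [hxe, det2, v]; linarith
    set z := v - (det2 v y / D) • x
    have hzy : det2 z y = det2 v y % D := by
      rw [Int.emod_def]; simp only [z, D, det2, Prod.fst_sub, Prod.snd_sub, Prod.smul_fst,
        Prod.smul_snd, smul_eq_mul]; ring
    have hxz : det2 x z = 1 := by
      rw [← hxv]; simp only [z, det2, Prod.fst_sub, Prod.snd_sub, Prod.smul_fst,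
        Prod.smul_snd, smul_eq_mul]; ring
    have := Int.emod_nonneg (det2 v y) hD.ne'
    have := Int.emod_lt_of_pos (det2 v y) hD
    have := (hvert z (by omega) (by omega) (by omega)).2
    omega
  · set m := det2 (e₁, e₂) y
    have hDm : D = g * m := by
      simp only [D, hxe, m, det2, Prod.smul_fst, Prod.smul_snd, smul_eq_mul]; ring
    have hxe0 : det2 x (e₁, e₂) = 0 := by
      simp only [hxe, det2, Prod.smul_fst, Prod.smul_snd, smul_eq_mul]; ring
    have hg2' : (2 : ℤ) ≤ g := by exact_mod_cast hg2
    have hm : 0 < m := pos_of_mul_pos_right (hDm ▸ hD) (by omega)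
    have := (hvert (e₁, e₂) hm.le hxe0.ge (by rw [hxe0, hDm]; nlinarith)).1
    rcases this with hm' | hm' <;> nlinarith

lemma eq_add_det2_smul_add_det2_smul {u v : ℤ × ℤ} (h : det2 u v = 1) (z : ℤ × ℤ) :
    z = det2 z v • u + det2 u z • v := by
  unfold det2 at *
  ext <;> simp only [Prod.fst_add, Prod.snd_add, Prod.smul_fst, Prod.smul_snd, smul_eq_mul]
  · linear_combination (-z.1) * h
  · linear_combination (-z.2) * h

lemma det2_add_add_sub_eq_two {p u w : ℤ × ℤ} (h : det2 u (w - p) = 1) :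
    det2 (p + u + u - p) (w - p) = 2 := by
  unfold det2 at h ⊢; simp only [Prod.fst_add, Prod.snd_add, Prod.fst_sub, Prod.snd_sub] at h ⊢
  linear_combination 2 * h

lemma triPts_eq_of_det2_eq_one {p u w : ℤ × ℤ} (h : det2 u (w - p) = 1) :
    triPts p (p + u + u) w = {p, p + u, p + u + u, w} := by
  have hu : p + u + u - p = u + u := by abel
  have hD := det2_add_add_sub_eq_two h
  ext q
  rw [mem_triPts_iff (by omega), hD, hu]
  have h2 : det2 (u + u) (q - p) = 2 * det2 u (q - p) := by
    simp only [det2, Prod.fst_add, Prod.snd_add]; ring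
  rw [h2]
  -- In the basis `u, w - p` the conditions read `s, t ≥ 0` and `s + 2 t ≤ 2`.
  constructor
  · intro hst
    have hq := eq_add_det2_smul_add_det2_smul h (q - p)
    have : (det2 (q - p) (w - p) = 0 ∨ det2 (q - p) (w - p) = 1 ∨ det2 (q - p) (w - p) = 2) ∧
        det2 u (q - p) = 0 ∨ det2 (q - p) (w - p) = 0 ∧ det2 u (q - p) = 1 := by omega
    rcases this with ⟨hs | hs | hs, ht⟩ | ⟨hs, ht⟩ <;> rw [hs, ht, sub_eq_iff_eq_add'] at hq <;>
      simp [hq, two_smul, add_assoc]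
  · unfold det2 at h ⊢
    simp only [Prod.fst_sub, Prod.snd_sub] at h
    rintro (rfl | rfl | rfl | rfl) <;> simp only [Prod.fst_sub, Prod.snd_sub, Prod.fst_add,
      Prod.snd_add] <;> refine ⟨?_, ?_, ?_⟩ <;> linarith

lemma isBorderTri_of_det2_eq_one {p u w : ℤ × ℤ} (h : det2 u (w - p) = 1) :
    IsBorderTri {p, p + u, p + u + u, w} := by
  have hD := det2_add_add_sub_eq_two h
  refine ⟨p, p + u + u, w, p + u, by omega, (triPts_eq_of_det2_eq_one h).symm, ?_, ?_, ?_⟩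
  · ext; simp only [mem_insert_iff, mem_singleton_iff]; tauto
  · rw [ncard_insert_of_notMem, ncard_insert_of_notMem, ncard_pair]
    all_goals simp only [ne_eq, mem_insert_iff, mem_singleton_iff, not_or]
    all_goals and_intros
    all_goals
      intro heq
      have h₁ := congrArg (fun q => det2 (q - p) (w - p)) heq
      have h₂ := congrArg (fun q => det2 u (q - p)) heq
      simp only [det2, Prod.fst_sub, Prod.snd_sub, Prod.fst_add, Prod.snd_add] at h h₁ h₂
      linarith
  · have hf : det2CLM (toR u) ≠ 0 := fun h0 => by
      have := DFunLike.congr_fun h0 (toR (w - p))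
      rw [det2CLM_toR, h] at this
      simp at this
    refine notMem_interior_of_subset_preimage_Ici hf (convexHull_subset_preimage_Ici (x := p)
      (by simp [det2]) ?_ (by rw [h]; norm_num)) ?_
    · simp only [det2, Prod.fst_sub, Prod.snd_sub, Prod.fst_add, Prod.snd_add]; ring_nf; rfl
    · simp [toR]; ring

lemma BStable.subset_of_sdiff_subset {S T : Set (ℤ × ℤ)} (hS : BStable S) (hT : IsBorderTri T)
    {w : ℤ × ℤ} (h : T \ {w} ⊆ S) : T ⊆ S := by
  have hT4 : T.ncard = 4 := by obtain ⟨-, -, -, -, -, -, -, h, -⟩ := hT; exact h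
  have hfin : T.Finite := finite_of_ncard_ne_zero (by omega)
  have h3 : T.ncard - 1 ≤ (T ∩ S).ncard := (pred_ncard_le_ncard_sdiff_singleton T w).trans
    (ncard_le_ncard (subset_inter sdiff_subset h) (hfin.inter_of_left S))
  have h4 : (T ∩ S).ncard ≤ T.ncard := ncard_le_ncard inter_subset_left hfin
  have := hS T hT
  exact inter_eq_left.mp (eq_of_subset_of_ncard_le inter_subset_left (by omega) hfin)

lemma BStable.mem_of_det2_eq_one {S : Set (ℤ × ℤ)} (hS : BStable S) {p u w : ℤ × ℤ}
    (h : det2 u (w - p) = 1) (h₀ : p ∈ S) (h₁ : p + u ∈ S) (h₂ : p + u + u ∈ S) : w ∈ S := by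
  refine hS.subset_of_sdiff_subset (isBorderTri_of_det2_eq_one h) (w := w) ?_ (by simp)
  rintro x ⟨hx | hx | hx | hx, hxw⟩ <;> subst hx <;> trivial

lemma BStable.eq_univ_of_det2_eq_one {S : Set (ℤ × ℤ)} (hS : BStable S) {p u v : ℤ × ℤ}
    (huv : det2 u v = 1) (h₀ : p ∈ S) (h₁ : p + u ∈ S) (h₂ : p + u + u ∈ S) : S = univ := by
  -- A full row contains three consecutive points `p + m • v + k • u`, which fill its neighbours.
  let Row (m : ℤ) : Prop := ∀ q, det2 u (q - p) = m → q ∈ S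
  have hrow : ∀ m k : ℤ, det2 u (p + m • v + k • u - p) = m := fun m k => by
    unfold det2 at huv ⊢
    simp only [Prod.fst_sub, Prod.snd_sub, Prod.fst_add, Prod.snd_add, Prod.smul_fst,
      Prod.smul_snd, smul_eq_mul]
    linear_combination m * huv
  have hstep : ∀ m k q, det2 u (q - p) = m + k → det2 u (q - (p + m • v)) = k :=
    fun m k q hq => by
      unfold det2 at huv hq ⊢
      simp only [Prod.fst_sub, Prod.snd_sub, Prod.fst_add, Prod.snd_add, Prod.smul_fst,
        Prod.smul_snd, smul_eq_mul] at hq ⊢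
      linear_combination hq - m * huv
  have up : ∀ m, Row m → Row (m + 1) := fun m hm q hq => by
    refine hS.mem_of_det2_eq_one (hstep m 1 q hq) (hm _ ?_) (hm _ ?_) (hm _ ?_)
    · simpa using hrow m 0
    · simpa using hrow m 1
    · simpa [add_assoc, ← two_smul ℤ u] using hrow m 2
  have down : ∀ m, Row m → Row (m - 1) := fun m hm q hq => by
    refine hS.mem_of_det2_eq_one (p := p + m • v + u + u) (u := -u) ?_
      (hm _ ?_) (hm _ ?_) (hm _ ?_)
    · have := hstep m (-1) q (by rw [hq]; ring)
      unfold det2 at this ⊢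
      simp only [Prod.fst_sub, Prod.snd_sub, Prod.fst_add, Prod.snd_add, Prod.fst_neg,
        Prod.snd_neg] at this ⊢
      linear_combination -this
    · simpa [add_assoc, ← two_smul ℤ u] using hrow m 2
    · simpa using hrow m 1
    · simpa using hrow m 0
  refine eq_univ_of_forall fun q => ?_
  exact Int.inductionOn' (det2 u (q - p)) 1 (motive := Row)
    (fun q hq => hS.mem_of_det2_eq_one hq h₀ h₁ h₂) (fun m _ => up m) (fun m _ => down m) q rfl

lemma BStable.eq_univ_of_triPts_subset {S : Set (ℤ × ℤ)} (hS : BStable S) {a b c d : ℤ × ℤ}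
    (hD : 0 < det2 (b - a) (c - a)) (hT : triPts a b c ⊆ {a, b, c, d}) (hd : d ∈ triPts a b c)
    (hβ₀ : 0 < det2 (a - c) (d - c)) (hβ₁ : det2 (a - c) (d - c) < det2 (b - a) (c - a))
    (ha : a ∈ S) (hc : c ∈ S) (hdS : d ∈ S) : S = univ := by
  have hD' : det2 (c - d) (a - d) = det2 (a - c) (d - c) := by
    simp only [det2, Prod.fst_sub, Prod.snd_sub]; ring
  -- The weights of `b` in `d c a` sum to `det2 (c - d) (a - d) < D`, but the one at `d` is `D`.
  have hb : b ∉ triPts d c a := by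
    rw [mem_triPts_iff_det2_nonneg (hD' ▸ hβ₀)]
    have := det2_add_det2_add_det2 d c a b
    have : det2 (a - c) (b - c) = det2 (b - a) (c - a) := by
      simp only [det2, Prod.fst_sub, Prod.snd_sub]; ring
    omega
  have hempty : triPts d c a ⊆ {d, c, a} := fun q hq => by
    have := hT (triPts_subset_triPts hd (subset_convexHull ℝ _ (by simp))
      (subset_convexHull ℝ _ (by simp)) hq)
    simp only [mem_insert_iff, mem_singleton_iff] at this ⊢
    rcases this with rfl | rfl | rfl | rfl <;> tauto
  have h1 := det2_eq_one_of_triPts_subset (hD' ▸ hβ₀) hempty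
  have hc' : d + (c - d) ∈ S := by simpa using hc
  have hsub : {d, d + (c - d), d + (c - d) + (c - d), a} ⊆ S := by
    refine hS.subset_of_sdiff_subset (isBorderTri_of_det2_eq_one h1)
      (w := d + (c - d) + (c - d)) ?_
    rintro x ⟨hx | hx | hx | hx, hxw⟩ <;> subst hx <;> trivial
  exact hS.eq_univ_of_det2_eq_one h1 hdS hc' (hsub (by simp))

lemma BStable.eq_univ_of_triPts_eq_insert {S : Set (ℤ × ℤ)} (hS : BStable S) {a b c d : ℤ × ℤ}
    (hD : 0 < det2 (b - a) (c - a)) (hT : triPts a b c = {a, b, c, d})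
    (hd : d ∉ ({a, b, c} : Set (ℤ × ℤ))) (hsub : triPts a b c ⊆ S) : S = univ := by
  set D := det2 (b - a) (c - a)
  have hdT : d ∈ triPts a b c := hT ▸ by simp
  have hmem : ∀ x ∈ ({a, b, c, d} : Set (ℤ × ℤ)), x ∈ S := fun x hx => hsub (hT ▸ hx)
  obtain ⟨h₁, h₂, h₃⟩ := (mem_triPts_iff_det2_nonneg hD).mp hdT
  have hsum := det2_add_det2_add_det2 a b c d
  have hDb : det2 (c - b) (a - b) = D := by
    simp only [D, det2, Prod.fst_sub, Prod.snd_sub]; ring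
  have hDc : det2 (a - c) (b - c) = D := by
    simp only [D, det2, Prod.fst_sub, Prod.snd_sub]; ring
  have hTb : triPts b c a ⊆ {b, c, a, d} := by
    rw [triPts_rotate, hT]; intro x; simp only [mem_insert_iff, mem_singleton_iff]; tauto
  have hTc : triPts c a b ⊆ {c, a, b, d} := by
    rw [triPts_rotate, triPts_rotate, hT]; intro x
    simp only [mem_insert_iff, mem_singleton_iff]; tauto
  by_cases hβ : 0 < det2 (a - c) (d - c) ∧ det2 (a - c) (d - c) < D
  · exact hS.eq_univ_of_triPts_subset hD hT.subset hdT hβ.1 hβ.2 (hmem a (by simp))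
      (hmem c (by simp)) (hmem d (by simp))
  by_cases hγ : 0 < det2 (b - a) (d - a) ∧ det2 (b - a) (d - a) < D
  · exact hS.eq_univ_of_triPts_subset (hDb ▸ hD) hTb (triPts_rotate a b c ▸ hdT) hγ.1
      (hDb ▸ hγ.2) (hmem b (by simp)) (hmem a (by simp)) (hmem d (by simp))
  by_cases hα : 0 < det2 (c - b) (d - b) ∧ det2 (c - b) (d - b) < D
  · exact hS.eq_univ_of_triPts_subset (hDc ▸ hD) hTc
      (triPts_rotate b c a ▸ triPts_rotate a b c ▸ hdT) hα.1 (hDc ▸ hα.2)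
      (hmem c (by simp)) (hmem b (by simp)) (hmem d (by simp))
  -- Otherwise the weights of `d` are `D, 0, 0` in some order, and `d` is a vertex.
  have hcramer := det2_smul_eq_add a b c d
  have hD0 : D ≠ 0 := hD.ne'
  exfalso
  apply hd
  have : (det2 (c - b) (d - b) = D ∧ det2 (a - c) (d - c) = 0 ∧ det2 (b - a) (d - a) = 0) ∨
      (det2 (c - b) (d - b) = 0 ∧ det2 (a - c) (d - c) = D ∧ det2 (b - a) (d - a) = 0) ∨
      (det2 (c - b) (d - b) = 0 ∧ det2 (a - c) (d - c) = 0 ∧ det2 (b - a) (d - a) = D) := by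
    omega
  rcases this with ⟨e₁, e₂, e₃⟩ | ⟨e₁, e₂, e₃⟩ | ⟨e₁, e₂, e₃⟩ <;>
    simp only [e₁, e₂, e₃, zero_smul, add_zero, zero_add] at hcramer <;>
    simp [smul_right_injective (ℤ × ℤ) hD0 hcramer]

lemma IsMinimalTri.ncard_eq_four {T : Set (ℤ × ℤ)} (hT : IsMinimalTri T) : T.ncard = 4 := by
  rcases hT with ⟨-, -, -, -, -, -, -, h, -⟩ | ⟨-, -, -, -, -, -, -, h, -⟩ <;> exact h

lemma IsMinimalTri.finite {T : Set (ℤ × ℤ)} (hT : IsMinimalTri T) : T.Finite :=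
  finite_of_ncard_ne_zero (by simp [hT.ncard_eq_four])

lemma BStable.eq_univ_of_isMinimalTri_subset {S T : Set (ℤ × ℤ)} (hS : BStable S)
    (hT : IsMinimalTri T) (hsub : T ⊆ S) : S = univ := by
  obtain ⟨a, b, c, d, hD, hTabc, hTeq, hT4⟩ : ∃ a b c d : ℤ × ℤ, det2 (b - a) (c - a) ≠ 0 ∧
      T = triPts a b c ∧ T = {a, b, c, d} ∧ T.ncard = 4 := by
    rcases hT with ⟨a, b, c, d, h⟩ | ⟨a, b, c, d, h⟩ <;>
      exact ⟨a, b, c, d, h.1, h.2.1, h.2.2.1, h.2.2.2.1⟩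
  have hd : d ∉ ({a, b, c} : Set (ℤ × ℤ)) := fun hd => by
    have : T.ncard ≤ 3 := calc
      T.ncard ≤ ({a, b, c} : Set (ℤ × ℤ)).ncard := ncard_le_ncard <| by
        rw [hTeq]; rintro x (rfl | rfl | rfl | rfl) <;> simp_all
      _ ≤ 3 := (ncard_insert_le _ _).trans (by linarith [ncard_insert_le b {c}, ncard_singleton c])
    omega
  subst hTabc
  rcases hD.lt_or_gt with hneg | hpos
  · refine hS.eq_univ_of_triPts_eq_insert (b := c) (c := b) (d := d) ?_ ?_ ?_
      (triPts_swap a b c ▸ hsub)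
    · have : det2 (c - a) (b - a) = -det2 (b - a) (c - a) := by unfold det2; ring
      omega
    · rw [triPts_swap, hTeq]; ext; simp only [mem_insert_iff, mem_singleton_iff]; tauto
    · simpa [or_comm, or_left_comm] using hd
  · exact hS.eq_univ_of_triPts_eq_insert hpos hTeq hd hsub

theorem stmt9 (S : Set (ℤ × ℤ)) (hS : S ≠ Set.univ) (h : BIStable S) :
    (∀ T, IsMinimalTri T → (T ∩ S).ncard ≤ 2) ∧
    (∀ S' : Set (ℤ × ℤ), S' ⊆ S → BIStable S') := by
  obtain ⟨hB, hI⟩ := h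
  have hle : ∀ T, IsMinimalTri T → (T ∩ S).ncard ≤ 2 := by
    intro T hT
    have hfin := hT.finite
    have h3 : (T ∩ S).ncard ≠ 3 := hT.elim (hB T) (hI T)
    have h4 : (T ∩ S).ncard ≠ 4 := fun h4 => hS <| hB.eq_univ_of_isMinimalTri_subset hT <|
      inter_eq_left.mp <| eq_of_subset_of_ncard_le inter_subset_left
        (by rw [h4, hT.ncard_eq_four]) hfin
    have : (T ∩ S).ncard ≤ 4 := hT.ncard_eq_four ▸ ncard_le_ncard inter_subset_left hfin
    omega
  refine ⟨hle, fun S' hS' => ?_⟩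
  have h3 : ∀ T, IsMinimalTri T → (T ∩ S').ncard ≠ 3 := fun T hT => by
    have := ncard_le_ncard (inter_subset_inter_right T hS') (hT.finite.inter_of_left S)
    have := hle T hT
    omega
  exact ⟨fun T hT => h3 T (Or.inl hT), fun T hT => h3 T (Or.inr hT)⟩
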